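/- If the pair of random variables (X,Y) is independent of Z, then mcf((X,Z),(Y,Z)) = (mcf(X,Y), Z); in particular J_GK((X,Z),(Y,Z)) = J_GK(X,Y) + H(Z). -/

import Mathlib

open Real Finset

/-- Probability that random variable `X` takes value `a`, under the distribution `p` on `Ω`. -/
noncomputable def pr {Ω α : Type*} [Fintype Ω] [DecidableEq α]
    (p : Ω → ℝ) (X : Ω → α) (a : α) : ℝ :=
  ∑ ω ∈ Finset.univ.filter (fun ω => X ω = a), p ω

/-- Shannon entropy (natural log) of a random variable `X` on the finite space `Ω`. -/
noncomputable def ent {Ω α : Type*} [Fintype Ω] [DecidableEq α]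
    (p : Ω → ℝ) (X : Ω → α) : ℝ :=
  ∑ a ∈ Finset.univ.image X, Real.negMulLog (pr p X a)

/-- Conditional entropy H(X | Y) = H(X,Y) - H(Y). -/
noncomputable def cent {Ω α β : Type*} [Fintype Ω] [DecidableEq α] [DecidableEq β]
    (p : Ω → ℝ) (X : Ω → α) (Y : Ω → β) : ℝ :=
  ent p (fun ω => (X ω, Y ω)) - ent p Y

/-- `p` is a probability distribution on `Ω`. -/
def IsProb {Ω : Type*} [Fintype Ω] (p : Ω → ℝ) : Prop :=
  (∀ ω, 0 ≤ p ω) ∧ ∑ ω, p ω = 1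

/-- Independence of two random variables under `p`. -/
def IndepRV {Ω α β : Type*} [Fintype Ω] [DecidableEq α] [DecidableEq β]
    (p : Ω → ℝ) (X : Ω → α) (Y : Ω → β) : Prop :=
  ∀ a b, pr p (fun ω => (X ω, Y ω)) (a, b) = pr p X a * pr p Y b

/-- `G` is a common function of `U` and `V`: H(G|U) = H(G|V) = 0. -/
def IsCF {Ω α β γ : Type*} [Fintype Ω] [DecidableEq α] [DecidableEq β] [DecidableEq γ]
    (p : Ω → ℝ) (U : Ω → α) (V : Ω → β) (G : Ω → γ) : Prop :=
  cent p G U = 0 ∧ cent p G V = 0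

/-- `G` is a maximal common function (Gács–Körner) of `U` and `V`:
a common function of maximal entropy among all common functions. -/
def IsMCF {Ω α β γ : Type*} [Fintype Ω] [DecidableEq α] [DecidableEq β] [DecidableEq γ]
    (p : Ω → ℝ) (U : Ω → α) (V : Ω → β) (G : Ω → γ) : Prop :=
  IsCF p U V G ∧ ∀ G' : Ω → ℕ, IsCF p U V G' → ent p G' ≤ ent p G

/-!
A common function `G'` of `(X, Z)` and `(Y, Z)` is, on each slice `{Z = z}`, a function `f_z`
of `X`. Since `(X, Y)` is independent of `Z`, every slice carries the whole joint support of
`(X, Y)`, so `f_z ∘ X` is also a function of `Y`: a common function of `X` and `Y`, hence a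
function of the maximal one `G`. Thus `G'` is a function of `(G, Z)`, which is itself a common function, and
`H(G, Z) = H(G) + H(Z)` because `G`, a function of `X`, is independent of `Z`.
-/

def Determines {Ω α β : Type*} (p : Ω → ℝ) (B : Ω → β) (A : Ω → α) : Prop :=
  ∀ ⦃ω ω'⦄, p ω ≠ 0 → p ω' ≠ 0 → B ω = B ω' → A ω = A ω'

section
variable {Ω α β γ : Type*} {p : Ω → ℝ} {A : Ω → α} {B : Ω → β} {C : Ω → γ}

theorem determines_fst : Determines p (fun ω => (A ω, B ω)) A :=
  fun _ _ _ _ h => (Prod.mk.inj h).1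

theorem determines_snd : Determines p (fun ω => (A ω, B ω)) B :=
  fun _ _ _ _ h => (Prod.mk.inj h).2

theorem Determines.trans (h₁ : Determines p C B) (h₂ : Determines p B A) : Determines p C A :=
  fun _ _ hω hω' h => h₂ hω hω' (h₁ hω hω' h)

theorem Determines.comp (h : Determines p B A) (f : α → γ) : Determines p B (fun ω => f (A ω)) :=
  fun _ _ hω hω' hB => congrArg f (h hω hω' hB)

theorem Determines.pair (hA : Determines p C A) (hB : Determines p C B) :
    Determines p C (fun ω => (A ω, B ω)) :=
  fun _ _ hω hω' h => Prod.ext (hA hω hω' h) (hB hω hω' h)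

theorem Determines.exists_eq_comp [Nonempty Ω] (h : Determines p B A) :
    ∃ φ : β → α, ∀ ω, p ω ≠ 0 → A ω = φ (B ω) := by
  refine ⟨fun b => A (Classical.epsilon fun ω => p ω ≠ 0 ∧ B ω = b), fun ω hω => ?_⟩
  obtain ⟨hω', hB⟩ := Classical.epsilon_spec (p := fun ω' => p ω' ≠ 0 ∧ B ω' = B ω) ⟨ω, hω, rfl⟩
  exact (h hω' hω hB).symm

end

section
variable {Ω α β γ : Type*} [Fintype Ω] [DecidableEq α] [DecidableEq β] [DecidableEq γ]
  {p : Ω → ℝ}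

theorem pr_nonneg (hp : ∀ ω, 0 ≤ p ω) (X : Ω → α) (a : α) : 0 ≤ pr p X a :=
  Finset.sum_nonneg fun ω _ => hp ω

theorem pr_eq_zero_of_forall {X : Ω → α} {a : α} (h : ∀ ω, X ω = a → p ω = 0) :
    pr p X a = 0 :=
  Finset.sum_eq_zero fun ω hω => h ω (Finset.mem_filter.1 hω).2

theorem pr_pos (hp : ∀ ω, 0 ≤ p ω) (X : Ω → α) {ω : Ω} (hω : p ω ≠ 0) : 0 < pr p X (X ω) :=
  (lt_of_le_of_ne (hp ω) hω.symm).trans_le <|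
    Finset.single_le_sum (fun ν _ => hp ν) (by simp)

theorem exists_pos_of_pr_ne_zero {X : Ω → α} {a : α} (h : pr p X a ≠ 0) :
    ∃ ω, p ω ≠ 0 ∧ X ω = a := by
  obtain ⟨ω, hω, hpω⟩ := Finset.exists_ne_zero_of_sum_ne_zero h
  exact ⟨ω, hpω, (Finset.mem_filter.1 hω).2⟩

theorem pr_congr_ae {X X' : Ω → α} (h : ∀ ω, p ω ≠ 0 → X ω = X' ω) (a : α) :
    pr p X a = pr p X' a := by
  unfold pr
  rw [← Finset.sum_filter_ne_zero, ← Finset.sum_filter_ne_zero (s := univ.filter _)]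
  congr 1
  ext ω
  simp only [Finset.mem_filter, Finset.mem_univ, true_and]
  exact ⟨fun ⟨hX, hω⟩ => ⟨h ω hω ▸ hX, hω⟩, fun ⟨hX, hω⟩ => ⟨(h ω hω).symm ▸ hX, hω⟩⟩

theorem sum_pr_eq_one (hp : IsProb p) (X : Ω → α) : ∑ a ∈ univ.image X, pr p X a = 1 := by
  rw [← hp.2]
  exact Finset.sum_fiberwise_of_maps_to (fun ω _ => Finset.mem_image_of_mem X (mem_univ ω)) p

theorem pr_eq_sum_pr_pair (X : Ω → α) (Y : Ω → β) (b : β) :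
    pr p Y b = ∑ a ∈ univ.image X, pr p (fun ω => (X ω, Y ω)) (a, b) := by
  unfold pr
  rw [← Finset.sum_fiberwise_of_maps_to (g := X)
    (fun ω _ => Finset.mem_image_of_mem X (mem_univ ω)) p]
  refine Finset.sum_congr rfl fun a _ => Finset.sum_congr ?_ fun _ _ => rfl
  ext ω
  simp [and_comm]

theorem ent_eq_sum_of_subset (X : Ω → α) {S : Finset α} (hS : univ.image X ⊆ S) :
    ent p X = ∑ a ∈ S, negMulLog (pr p X a) := by
  refine Finset.sum_subset hS fun a _ ha => ?_
  rw [pr_eq_zero_of_forall fun ω hω => absurd (Finset.mem_image.2 ⟨ω, mem_univ ω, hω⟩) ha,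
    negMulLog_zero]

theorem ent_eq_sum_support (X : Ω → α) :
    ent p X = ∑ a ∈ (univ.filter (p · ≠ 0)).image X, negMulLog (pr p X a) := by
  refine (Finset.sum_subset (Finset.image_subset_image (Finset.filter_subset _ _))
    fun a _ ha => ?_).symm
  rw [pr_eq_zero_of_forall fun ω hω => ?_, negMulLog_zero]
  by_contra hpω
  exact ha (Finset.mem_image.2 ⟨ω, by simpa using hpω, hω⟩)

theorem ent_comp_of_injOn (X : Ω → α) {f : α → β} (hf : Set.InjOn f (X '' {ω | p ω ≠ 0})) :
    ent p (fun ω => f (X ω)) = ent p X := by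
  have hpr : ∀ ω, p ω ≠ 0 → pr p (fun ω => f (X ω)) (f (X ω)) = pr p X (X ω) := by
    intro ω hω
    unfold pr
    rw [← Finset.sum_filter_ne_zero, ← Finset.sum_filter_ne_zero (s := univ.filter _)]
    congr 1
    ext ν
    simp only [Finset.mem_filter, Finset.mem_univ, true_and]
    exact ⟨fun ⟨h, hν⟩ => ⟨hf ⟨ν, hν, rfl⟩ ⟨ω, hω, rfl⟩ h, hν⟩,
      fun ⟨h, hν⟩ => ⟨congrArg f h, hν⟩⟩
  have himage : (univ.filter (p · ≠ 0)).image (fun ω => f (X ω))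
      = ((univ.filter (p · ≠ 0)).image X).image f := Finset.image_image.symm
  rw [ent_eq_sum_support, ent_eq_sum_support, himage,
    Finset.sum_image fun a ha b hb h => hf (by simpa using ha) (by simpa using hb) h]
  refine Finset.sum_congr rfl fun a ha => ?_
  obtain ⟨ω, hω, rfl⟩ := Finset.mem_image.1 ha
  rw [hpr ω (by simpa using hω)]

theorem ent_pair_comm (X : Ω → α) (Y : Ω → β) :
    ent p (fun ω => (X ω, Y ω)) = ent p (fun ω => (Y ω, X ω)) :=
  (ent_comp_of_injOn _ Prod.swap_injective.injOn).symm

end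

section
variable {Ω α β γ : Type*} [Fintype Ω] [DecidableEq α] [DecidableEq β] [DecidableEq γ]
  {p : Ω → ℝ}

theorem pr_comp_eq_sum (X : Ω → α) (f : α → β) (b : β) {T : Finset α}
    (hT : ∀ ω, f (X ω) = b ↔ X ω ∈ T) :
    pr p (fun ω => f (X ω)) b = ∑ a ∈ T, pr p X a := by
  unfold pr
  rw [← Finset.sum_fiberwise_of_maps_to (g := X) fun ω hω => (hT ω).1 (Finset.mem_filter.1 hω).2]
  refine Finset.sum_congr rfl fun a ha => Finset.sum_congr ?_ fun _ _ => rfl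
  ext ω
  simp only [Finset.mem_filter, Finset.mem_univ, true_and, and_iff_right_iff_imp]
  rintro rfl
  exact (hT ω).2 ha

theorem IndepRV.comp {X : Ω → α} {Z : Ω → γ} (h : IndepRV p X Z) (φ : α → β) :
    IndepRV p (fun ω => φ (X ω)) Z := by
  intro b z
  set T := (univ.image X).filter (φ · = b)
  have hjoint : pr p (fun ω => (φ (X ω), Z ω)) (b, z)
      = ∑ a ∈ T, pr p (fun ω => (X ω, Z ω)) (a, z) := by
    refine (pr_comp_eq_sum (fun ω => (X ω, Z ω)) (Prod.map φ id) (b, z) (T := T ×ˢ {z})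
      fun ω => by simp [T, and_comm, @eq_comm _ z]).trans ?_
    simp only [product_singleton, sum_map, Function.Embedding.coeFn_mk]
  rw [hjoint, pr_comp_eq_sum X φ b fun ω => ?_, Finset.sum_mul]
  · exact Finset.sum_congr rfl fun a _ => h a z
  simp [T]

theorem IndepRV.of_determines {W : Ω → α} {A : Ω → β} {Z : Ω → γ} (h : IndepRV p W Z)
    (hA : Determines p W A) : IndepRV p A Z := by
  intro a z
  cases isEmpty_or_nonempty Ω
  · simp [pr]
  obtain ⟨φ, hφ⟩ := hA.exists_eq_comp
  rw [pr_congr_ae (X' := fun ω => (φ (W ω), Z ω)) (fun ω hω => by rw [hφ ω hω]),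
    pr_congr_ae hφ]
  exact h.comp φ a z

theorem IndepRV.exists_pos_joint (hp : ∀ ω, 0 ≤ p ω) {W : Ω → α} {Z : Ω → γ}
    (h : IndepRV p W Z) {ω ω' : Ω} (hω : p ω ≠ 0) (hω' : p ω' ≠ 0) :
    ∃ ν, p ν ≠ 0 ∧ W ν = W ω ∧ Z ν = Z ω' := by
  have hpos : pr p (fun ν => (W ν, Z ν)) (W ω, Z ω') ≠ 0 := by
    rw [h]
    exact mul_ne_zero (pr_pos hp W hω).ne' (pr_pos hp Z hω').ne'
  obtain ⟨ν, hν, hWZ⟩ := exists_pos_of_pr_ne_zero hpos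
  exact ⟨ν, hν, (Prod.mk.inj hWZ).1, (Prod.mk.inj hWZ).2⟩

theorem neg_mul_log_le_negMulLog {x s : ℝ} (hx : 0 ≤ x) (hxs : x ≤ s) :
    -x * log s ≤ negMulLog x := by
  rcases hx.eq_or_lt with rfl | hx
  · simp
  · have := log_le_log hx hxs
    unfold negMulLog
    nlinarith

theorem neg_mul_log_lt_negMulLog {x s : ℝ} (hx : 0 < x) (hxs : x < s) :
    -x * log s < negMulLog x := by
  have := log_lt_log hx hxs
  unfold negMulLog
  nlinarith

theorem negMulLog_sum_eq {ι : Type*} (s : Finset ι) (f : ι → ℝ) :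
    negMulLog (∑ i ∈ s, f i) = ∑ i ∈ s, -f i * log (∑ j ∈ s, f j) := by
  rw [negMulLog, ← Finset.sum_mul, Finset.sum_neg_distrib]

theorem negMulLog_sum_le {ι : Type*} {s : Finset ι} {f : ι → ℝ} (hf : ∀ i ∈ s, 0 ≤ f i) :
    negMulLog (∑ i ∈ s, f i) ≤ ∑ i ∈ s, negMulLog (f i) := by
  rw [negMulLog_sum_eq]
  exact Finset.sum_le_sum fun i hi =>
    neg_mul_log_le_negMulLog (hf i hi) (Finset.single_le_sum hf hi)

theorem negMulLog_sum_lt {ι : Type*} {s : Finset ι} {f : ι → ℝ} (hf : ∀ i ∈ s, 0 ≤ f i)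
    {i j : ι} (hi : i ∈ s) (hj : j ∈ s) (hij : i ≠ j) (hfi : 0 < f i) (hfj : 0 < f j) :
    negMulLog (∑ k ∈ s, f k) < ∑ k ∈ s, negMulLog (f k) := by
  rw [negMulLog_sum_eq]
  refine Finset.sum_lt_sum (fun k hk =>
    neg_mul_log_le_negMulLog (hf k hk) (Finset.single_le_sum hf hk))
    ⟨i, hi, neg_mul_log_lt_negMulLog hfi
      (Finset.single_lt_sum hij.symm hi hj hfj fun k hk _ => hf k hk)⟩

theorem ent_pair_eq_sum (X : Ω → α) (Y : Ω → β) :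
    ent p (fun ω => (X ω, Y ω))
      = ∑ b ∈ univ.image Y, ∑ a ∈ univ.image X, negMulLog (pr p (fun ω => (X ω, Y ω)) (a, b)) := by
  have hS : univ.image (fun ω => (X ω, Y ω)) ⊆ univ.image X ×ˢ univ.image Y := by
    intro _ h
    obtain ⟨ω, -, rfl⟩ := Finset.mem_image.1 h
    simp
  rw [ent_eq_sum_of_subset _ hS, Finset.sum_product_right]

theorem ent_eq_sum_pr_pair (X : Ω → α) (Y : Ω → β) :
    ent p Y = ∑ b ∈ univ.image Y,
      negMulLog (∑ a ∈ univ.image X, pr p (fun ω => (X ω, Y ω)) (a, b)) :=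
  Finset.sum_congr rfl fun b _ => by rw [pr_eq_sum_pr_pair X]

theorem ent_le_ent_pair_snd (hp : ∀ ω, 0 ≤ p ω) (X : Ω → α) (Y : Ω → β) :
    ent p Y ≤ ent p (fun ω => (X ω, Y ω)) := by
  rw [ent_eq_sum_pr_pair X, ent_pair_eq_sum]
  exact Finset.sum_le_sum fun b _ => negMulLog_sum_le fun a _ => pr_nonneg hp _ _

theorem ent_le_ent_pair_fst (hp : ∀ ω, 0 ≤ p ω) (X : Ω → α) (Y : Ω → β) :
    ent p X ≤ ent p (fun ω => (X ω, Y ω)) :=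
  ent_pair_comm Y X ▸ ent_le_ent_pair_snd hp Y X

theorem ent_lt_ent_pair_snd (hp : ∀ ω, 0 ≤ p ω) {X : Ω → α} {Y : Ω → β} {ω ω' : Ω}
    (hω : p ω ≠ 0) (hω' : p ω' ≠ 0) (hY : Y ω = Y ω') (hX : X ω ≠ X ω') :
    ent p Y < ent p (fun ω => (X ω, Y ω)) := by
  rw [ent_eq_sum_pr_pair X, ent_pair_eq_sum]
  refine Finset.sum_lt_sum (fun b _ => negMulLog_sum_le fun a _ => pr_nonneg hp _ _)
    ⟨Y ω, by simp, negMulLog_sum_lt (fun a _ => pr_nonneg hp _ _) (by simp) (by simp) hX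
      (pr_pos hp (fun ω => (X ω, Y ω)) hω) ?_⟩
  simpa [hY] using pr_pos hp (fun ω => (X ω, Y ω)) hω'

theorem IndepRV.ent_pair (hp : IsProb p) {X : Ω → α} {Y : Ω → β} (h : IndepRV p X Y) :
    ent p (fun ω => (X ω, Y ω)) = ent p X + ent p Y := by
  rw [ent_pair_eq_sum]
  calc _ = ∑ b ∈ univ.image Y,
        (pr p Y b * ent p X + (∑ a ∈ univ.image X, pr p X a) * negMulLog (pr p Y b)) := by
        refine Finset.sum_congr rfl fun b _ => ?_
        simp only [h _ b, negMulLog_mul, Finset.sum_add_distrib, ← Finset.mul_sum,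
          ← Finset.sum_mul]
        rfl
    _ = ent p X + ent p Y := by
        rw [sum_pr_eq_one hp X, Finset.sum_add_distrib, ← Finset.sum_mul, sum_pr_eq_one hp Y]
        simp [ent]

theorem cent_eq_zero_iff (hp : ∀ ω, 0 ≤ p ω) {X : Ω → α} {Y : Ω → β} :
    cent p X Y = 0 ↔ Determines p Y X := by
  refine ⟨fun h ω ω' hω hω' hY => ?_, fun h => ?_⟩
  · by_contra hX
    have := ent_lt_ent_pair_snd hp hω hω' hY hX
    unfold cent at h
    linarith
  · have hsnd : ent p (fun ω => (X ω, Y ω).2) = ent p (fun ω => (X ω, Y ω)) := by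
      refine ent_comp_of_injOn _ ?_
      rintro _ ⟨ω, hω, rfl⟩ _ ⟨ω', hω', rfl⟩ hY
      exact Prod.ext (h hω hω' hY) hY
    unfold cent
    rw [← hsnd, sub_self]

theorem isCF_iff (hp : ∀ ω, 0 ≤ p ω) {U : Ω → α} {V : Ω → β} {G : Ω → γ} :
    IsCF p U V G ↔ Determines p U G ∧ Determines p V G := by
  rw [IsCF, cent_eq_zero_iff hp, cent_eq_zero_iff hp]

theorem ent_le_of_determines (hp : ∀ ω, 0 ≤ p ω) {X : Ω → α} {Y : Ω → β}
    (h : Determines p Y X) : ent p X ≤ ent p Y := by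
  have := (cent_eq_zero_iff hp).2 h
  unfold cent at this
  linarith [ent_le_ent_pair_fst hp X Y]

end

section
variable {Ω α β γ δ ε : Type*} [Fintype Ω] [DecidableEq α] [DecidableEq β] [DecidableEq γ]
  [DecidableEq δ] [DecidableEq ε] {p : Ω → ℝ}

/-- `IsMCF` only compares `G` with `ℕ`-valued common functions; any common function can be
recoded as one, since its range is finite. -/
theorem IsMCF.ent_le (hp : ∀ ω, 0 ≤ p ω) {U : Ω → α} {V : Ω → β} {G : Ω → γ}
    (hG : IsMCF p U V G) {A : Ω → ε} (hA : IsCF p U V A) : ent p A ≤ ent p G := by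
  obtain ⟨e, he⟩ := Set.countable_iff_exists_injOn.1 (Set.finite_range A).countable
  obtain ⟨hAU, hAV⟩ := (isCF_iff hp).1 hA
  have h := hG.2 (fun ω => e (A ω)) ((isCF_iff hp).2 ⟨hAU.comp e, hAV.comp e⟩)
  rwa [ent_comp_of_injOn A (he.mono (Set.image_subset_range _ _))] at h

theorem IsMCF.determines (hp : ∀ ω, 0 ≤ p ω) {U : Ω → α} {V : Ω → β} {G : Ω → γ}
    (hG : IsMCF p U V G) {A : Ω → ε} (hA : IsCF p U V A) : Determines p G A := by
  obtain ⟨hAU, hAV⟩ := (isCF_iff hp).1 hA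
  obtain ⟨hGU, hGV⟩ := (isCF_iff hp).1 hG.1
  have hle : ent p (fun ω => (A ω, G ω)) ≤ ent p G :=
    hG.ent_le hp ((isCF_iff hp).2 ⟨hAU.pair hGU, hAV.pair hGV⟩)
  refine (cent_eq_zero_iff hp).1 ?_
  unfold cent
  linarith [ent_le_ent_pair_snd hp A G]

theorem isCF_slice (hp : ∀ ω, 0 ≤ p ω) {X : Ω → α} {Y : Ω → β} {Z : Ω → γ} {G' : Ω → ε}
    (hind : IndepRV p (fun ω => (X ω, Y ω)) Z)
    (hG' : IsCF p (fun ω => (X ω, Z ω)) (fun ω => (Y ω, Z ω)) G') {φ : α × γ → ε}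
    (hφ : ∀ ω, p ω ≠ 0 → G' ω = φ (X ω, Z ω)) {ω₀ : Ω} (hω₀ : p ω₀ ≠ 0) :
    IsCF p X Y (fun ω => φ (X ω, Z ω₀)) := by
  rw [isCF_iff hp] at hG' ⊢
  refine ⟨fun _ _ _ _ hX => congrArg (fun x => φ (x, Z ω₀)) hX, fun ω ω' hω hω' hY => ?_⟩
  obtain ⟨ν, hν, hXY, hZ⟩ := hind.exists_pos_joint hp hω hω₀
  obtain ⟨ν', hν', hXY', hZ'⟩ := hind.exists_pos_joint hp hω' hω₀
  obtain ⟨hX, hYν⟩ := Prod.mk.inj hXY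
  obtain ⟨hX', hYν'⟩ := Prod.mk.inj hXY'
  calc φ (X ω, Z ω₀) = G' ν := by rw [hφ ν hν, hX, hZ]
    _ = G' ν' := hG'.2 hν hν' (Prod.ext (hYν.trans (hY.trans hYν'.symm)) (hZ.trans hZ'.symm))
    _ = φ (X ω', Z ω₀) := by rw [hφ ν' hν', hX', hZ']

theorem IsMCF.determines_of_isCF_prod (hp : ∀ ω, 0 ≤ p ω) {X : Ω → α} {Y : Ω → β}
    {Z : Ω → γ} {G : Ω → δ} {G' : Ω → ε} (hG : IsMCF p X Y G)
    (hind : IndepRV p (fun ω => (X ω, Y ω)) Z)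
    (hG' : IsCF p (fun ω => (X ω, Z ω)) (fun ω => (Y ω, Z ω)) G') :
    Determines p (fun ω => (G ω, Z ω)) G' := by
  intro ω ω' hω hω' hGZ
  have : Nonempty Ω := ⟨ω⟩
  obtain ⟨φ, hφ⟩ := ((isCF_iff hp).1 hG').1.exists_eq_comp
  have hslice := hG.determines hp (isCF_slice hp hind hG' hφ hω)
  obtain ⟨hGeq, hZeq⟩ := Prod.mk.inj hGZ
  calc G' ω = φ (X ω, Z ω) := hφ ω hω
    _ = φ (X ω', Z ω) := hslice hω hω' hGeq
    _ = G' ω' := by rw [hZeq, hφ ω' hω']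

end

/-- If (X,Y) is independent of Z, then mcf((X,Z),(Y,Z)) = (mcf(X,Y), Z):
if `G` is a maximal common function of X and Y, then (G,Z) is a maximal common function
of (X,Z) and (Y,Z); in particular J_GK((X,Z),(Y,Z)) = J_GK(X,Y) + H(Z). -/
theorem mcf_adjoin_indep {Ω α β γ δ : Type*} [Fintype Ω]
    [DecidableEq α] [DecidableEq β] [DecidableEq γ] [DecidableEq δ]
    (p : Ω → ℝ) (hp : IsProb p)
    (X : Ω → α) (Y : Ω → β) (Z : Ω → γ)
    (hind : IndepRV p (fun ω => (X ω, Y ω)) Z)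
    (G : Ω → δ)
    (hG : IsMCF p X Y G) :
    IsMCF p (fun ω => (X ω, Z ω)) (fun ω => (Y ω, Z ω)) (fun ω => (G ω, Z ω)) ∧
    ent p (fun ω => (G ω, Z ω)) = ent p G + ent p Z := by
  obtain ⟨hGX, hGY⟩ := (isCF_iff hp.1).1 hG.1
  have hGZ : IndepRV p G Z := hind.of_determines (determines_fst.trans hGX)
  refine ⟨⟨(isCF_iff hp.1).2 ⟨?_, ?_⟩, fun G' hG' => ?_⟩, hGZ.ent_pair hp⟩
  · exact (determines_fst.trans hGX).pair determines_snd
  · exact (determines_fst.trans hGY).pair determines_snd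
  · exact ent_le_of_determines hp.1 (hG.determines_of_isCF_prod hp.1 hind hG')
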